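/- Let m > s ≥ 0 be integers and M > 0. Then there exist constants 0 < C₁ ≤ C₂ such that for every integer σ ≥ 1, C₁^σ (σ!)^{(m+1)/(s+1)} ≤ ∫₀^∞ ρ^{(m+1)σ} e^{−M ρ^{s+1}} dρ ≤ C₂^σ (σ!)^{(m+1)/(s+1)}. -/

import Mathlib

/-! The integral is `M ^ (-x) / (s + 1) * Γ x` with `x = a σ + c`, `a = (m + 1) / (s + 1)`
and `c = 1 / (s + 1)`, so up to geometric factors `C ^ σ` it is `Γ (a σ + c)`. Both bounds come
from the log-convexity of `Γ`, interpolating between `a σ + c` and integer points, where `Γ` is a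
factorial: as `a > 1`, `σ + 1` is a convex combination of `a σ + c` and a fixed point, and
`a σ + c` is a convex combination of `k σ + 1` and a fixed point for an integer `k > a / c`, where
`(k σ)! ≤ (k ^ k * e ^ k) ^ σ * (σ !) ^ k`. -/

open Real Set MeasureTheory
open scoped Nat

def GeomDominated (f g : ℕ → ℝ) : Prop :=
  ∃ C : ℝ, 0 < C ∧ ∀ n, 1 ≤ n → f n ≤ C ^ n * g n

namespace GeomDominated

variable {f g h : ℕ → ℝ}

theorem of_le_const_mul {K : ℝ} (hg : ∀ n, 0 ≤ g n)
    (hfg : ∀ n, 1 ≤ n → f n ≤ K * g n) : GeomDominated f g := by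
  refine ⟨max K 1, by positivity, fun n hn => (hfg n hn).trans ?_⟩
  exact mul_le_mul_of_nonneg_right
    ((le_max_left K 1).trans (le_self_pow₀ (le_max_right K 1) (by omega))) (hg n)

theorem trans (hfg : GeomDominated f g) (hgh : GeomDominated g h) : GeomDominated f h := by
  obtain ⟨C, hC, hf⟩ := hfg
  obtain ⟨D, hD, hg⟩ := hgh
  refine ⟨C * D, by positivity, fun n hn => ?_⟩
  calc f n ≤ C ^ n * g n := hf n hn
    _ ≤ C ^ n * (D ^ n * h n) := by gcongr; exact hg n hn
    _ = (C * D) ^ n * h n := by ring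

theorem rpow (hfg : GeomDominated f g) (hf : ∀ n, 0 ≤ f n) {a : ℝ} (ha : 0 ≤ a) :
    GeomDominated (fun n => f n ^ a) (fun n => g n ^ a) := by
  obtain ⟨C, hC, hfg⟩ := hfg
  refine ⟨C ^ a, by positivity, fun n hn => ?_⟩
  have hg : 0 ≤ g n := nonneg_of_mul_nonneg_right ((hf n).trans (hfg n hn)) (by positivity)
  calc f n ^ a ≤ (C ^ n * g n) ^ a := by gcongr; exacts [hf n, hfg n hn]
    _ = (C ^ a) ^ n * g n ^ a := by
      rw [mul_rpow (by positivity) hg, rpow_pow_comm hC.le]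

theorem const_mul_pow_mul_self {K r : ℝ} (hK : 0 < K) (hr : 0 < r) (hg : ∀ n, 0 ≤ g n) :
    GeomDominated (fun n => K * r ^ n * g n) g := by
  refine ⟨max K 1 * r, by positivity, fun n hn => ?_⟩
  have hKn : K ≤ max K 1 ^ n :=
    (le_max_left K 1).trans (le_self_pow₀ (le_max_right K 1) (by omega))
  rw [mul_pow]
  exact mul_le_mul_of_nonneg_right (mul_le_mul_of_nonneg_right hKn (by positivity)) (hg n)

theorem self_const_mul_pow_mul {K r : ℝ} (hK : 0 < K) (hr : 0 < r) (hg : ∀ n, 0 ≤ g n) :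
    GeomDominated g (fun n => K * r ^ n * g n) := by
  have := const_mul_pow_mul_self (g := fun n => K * r ^ n * g n) (inv_pos.2 hK) (inv_pos.2 hr)
    (fun n => by have := hg n; positivity)
  convert this using 2 with n
  rw [inv_pow]
  field_simp

theorem exists_pow_mul_le_and_le_pow_mul (hfg : GeomDominated f g) (hgf : GeomDominated g f)
    (hg₁ : 0 < g 1) :
    ∃ C₁ C₂ : ℝ, 0 < C₁ ∧ C₁ ≤ C₂ ∧
      ∀ n, 1 ≤ n → C₁ ^ n * g n ≤ f n ∧ f n ≤ C₂ ^ n * g n := by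
  obtain ⟨C, hC, hf⟩ := hfg
  obtain ⟨D, hD, hg⟩ := hgf
  have lower : ∀ n, 1 ≤ n → D⁻¹ ^ n * g n ≤ f n := fun n hn => by
    rw [inv_pow, inv_mul_le_iff₀ (by positivity)]
    exact hg n hn
  refine ⟨D⁻¹, C, by positivity, ?_, fun n hn => ⟨lower n hn, hf n hn⟩⟩
  have := (lower 1 le_rfl).trans (hf 1 le_rfl)
  rw [pow_one, pow_one] at this
  exact le_of_mul_le_mul_right this hg₁

end GeomDominated

theorem factorial_mul_geomDominated_factorial_pow (k : ℕ) :
    GeomDominated (fun n => ((k * n)! : ℝ)) (fun n => (n ! : ℝ) ^ k) := by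
  have hk : (0 : ℝ) < k ^ k := by exact_mod_cast Nat.pow_self_pos
  refine ⟨k ^ k * exp 1 ^ k, by positivity, fun n _ => ?_⟩
  have hn : (n : ℝ) ^ n ≤ exp 1 ^ n * n ! := by
    have := pow_div_factorial_le_exp (n : ℝ) n.cast_nonneg n
    rwa [div_le_iff₀ (by positivity), ← exp_one_pow] at this
  calc ((k * n)! : ℝ) ≤ ((k * n : ℕ) : ℝ) ^ (k * n) := mod_cast Nat.factorial_le_pow _
    _ = (k ^ k) ^ n * ((n : ℝ) ^ n) ^ k := by push_cast; ring
    _ ≤ (k ^ k) ^ n * (exp 1 ^ n * n !) ^ k := by gcongr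
    _ = (k ^ k * exp 1 ^ k) ^ n * (n ! : ℝ) ^ k := by ring

theorem Gamma_mul_add_geomDominated_factorial_rpow {a c : ℝ} (ha : 0 < a) (hc : 0 < c) :
    GeomDominated (fun n => Gamma (a * n + c)) (fun n => (n ! : ℝ) ^ a) := by
  obtain ⟨k, hk⟩ := exists_nat_gt (max a (a / c))
  have hak : a < k := (le_max_left _ _).trans_lt hk
  have hack : a < k * c := (div_lt_iff₀ hc).1 ((le_max_right _ _).trans_lt hk)
  have hk0 : (0 : ℝ) < k := ha.trans hak
  set θ := a / k
  -- chosen so that `θ * (k * n + 1) + (1 - θ) * Y = a * n + c`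
  set Y := (k * c - a) / (k - a)
  have hθ : θ < 1 := (div_lt_one hk0).2 hak
  have key (n : ℕ) : Gamma (a * n + c) ≤ ((k * n)! : ℝ) ^ θ * Gamma Y ^ (1 - θ) := by
    have := Gamma_mul_add_mul_le_rpow_Gamma_mul_rpow_Gamma (s := (k * n : ℕ) + 1) (t := Y)
      (by positivity) (div_pos (by linarith) (by linarith)) (by positivity) (sub_pos.2 hθ)
      (add_sub_cancel _ _)
    rwa [Gamma_nat_eq_factorial, show θ * ((k * n : ℕ) + 1) + (1 - θ) * Y = a * n + c by
      simp only [θ, Y]; push_cast; field_simp [(sub_pos.2 hak).ne']; ring] at this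
  have hΓ : GeomDominated (fun n => Gamma (a * n + c)) (fun n => ((k * n)! : ℝ) ^ θ) :=
    .of_le_const_mul (fun n => by positivity) fun n _ => (key n).trans_eq (mul_comm _ _)
  convert hΓ.trans ((factorial_mul_geomDominated_factorial_pow k).rpow (fun n => by positivity)
    (by positivity)) using 2 with n
  rw [← rpow_natCast_mul (by positivity), mul_div_cancel₀ _ hk0.ne']

theorem factorial_rpow_geomDominated_Gamma_mul_add {a c : ℝ} (ha : 1 < a) (hc : 0 < c)
    (hca : c < a) :
    GeomDominated (fun n => (n ! : ℝ) ^ a) (fun n => Gamma (a * n + c)) := by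
  have ha0 : 0 < a := one_pos.trans ha
  -- chosen so that `a⁻¹ * (a * n + c) + (1 - a⁻¹) * Y = n + 1`
  set Y := (a - c) / (a - 1)
  have key (n : ℕ) : (n ! : ℝ) ≤ Gamma (a * n + c) ^ a⁻¹ * Gamma Y ^ (1 - a⁻¹) := by
    have := Gamma_mul_add_mul_le_rpow_Gamma_mul_rpow_Gamma (s := a * n + c) (t := Y)
      (by positivity) (div_pos (by linarith) (by linarith)) (inv_pos.2 ha0)
      (sub_pos.2 (inv_lt_one_of_one_lt₀ ha)) (add_sub_cancel _ _)
    rwa [show a⁻¹ * (a * n + c) + (1 - a⁻¹) * Y = n + 1 by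
      simp only [Y]; field_simp [(sub_pos.2 ha).ne']; ring, Gamma_nat_eq_factorial] at this
  refine .of_le_const_mul (K := Gamma Y ^ (a - 1))
    (fun n => Gamma_nonneg_of_nonneg (by positivity)) fun n _ => ?_
  calc (n ! : ℝ) ^ a ≤ (Gamma (a * n + c) ^ a⁻¹ * Gamma Y ^ (1 - a⁻¹)) ^ a := by
        gcongr
        exact key n
    _ = Gamma Y ^ (a - 1) * Gamma (a * n + c) := by
      have hΓ : 0 ≤ Gamma (a * n + c) := Gamma_nonneg_of_nonneg (by positivity)
      have hΓY : 0 ≤ Gamma Y := Gamma_nonneg_of_nonneg (div_nonneg (by linarith) (by linarith))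
      rw [mul_rpow (by positivity) (by positivity), ← rpow_mul hΓ, ← rpow_mul hΓY,
        inv_mul_cancel₀ ha0.ne', rpow_one, sub_mul, inv_mul_cancel₀ ha0.ne', one_mul, mul_comm]

theorem integral_pow_mul_exp_neg_mul_pow {b : ℝ} (hb : 0 < b) (n : ℕ) {k : ℕ} (hk : k ≠ 0) :
    ∫ x in Ioi (0 : ℝ), x ^ n * exp (-b * x ^ k) =
      b ^ (-(n + 1) / k : ℝ) * (1 / k) * Gamma ((n + 1) / k) := by
  have := integral_rpow_mul_exp_neg_mul_rpow (p := k) (q := n) (by positivity)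
    (by linarith [n.cast_nonneg (α := ℝ)]) hb
  simpa only [rpow_natCast] using this

theorem stmt14 (m s : ℕ) (hms : s < m) (M : ℝ) (hM : 0 < M) :
    ∃ C₁ C₂ : ℝ, 0 < C₁ ∧ C₁ ≤ C₂ ∧
      ∀ σ : ℕ, 1 ≤ σ →
        C₁ ^ σ * (Nat.factorial σ : ℝ) ^ (((m : ℝ) + 1) / ((s : ℝ) + 1)) ≤
            ∫ ρ in Set.Ioi (0 : ℝ), ρ ^ ((m + 1) * σ) * Real.exp (-M * ρ ^ (s + 1)) ∧
          (∫ ρ in Set.Ioi (0 : ℝ), ρ ^ ((m + 1) * σ) * Real.exp (-M * ρ ^ (s + 1))) ≤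
            C₂ ^ σ * (Nat.factorial σ : ℝ) ^ (((m : ℝ) + 1) / ((s : ℝ) + 1)) := by
  set p : ℝ := s + 1
  set a : ℝ := (m + 1) / p
  have hp : 0 < p := by positivity
  have ha : 1 < a := (one_lt_div hp).2 (by simp only [p]; exact_mod_cast Nat.succ_lt_succ hms)
  have hc : 1 / p < a :=
    ((div_le_one hp).2 (by simp only [p]; linarith [s.cast_nonneg (α := ℝ)])).trans_lt ha
  have hI : ∀ σ : ℕ, ∫ ρ in Ioi (0 : ℝ), ρ ^ ((m + 1) * σ) * exp (-M * ρ ^ (s + 1)) =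
      M ^ (-(1 / p)) * (1 / p) * (M ^ (-a)) ^ σ * Gamma (a * σ + 1 / p) := fun σ => by
    rw [integral_pow_mul_exp_neg_mul_pow hM _ s.succ_ne_zero, ← rpow_natCast, ← rpow_mul hM.le,
      mul_right_comm _ _ (M ^ _), ← rpow_add hM]
    simp only [p, a]
    push_cast
    congr 2
    · congr 1; ring
    · ring
  have hΓ : ∀ σ : ℕ, 0 ≤ Gamma (a * σ + 1 / p) := fun σ =>
    Gamma_nonneg_of_nonneg (by positivity)
  have hK : 0 < M ^ (-(1 / p)) * (1 / p) := by positivity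
  have hr : 0 < M ^ (-a) := by positivity
  have upper := (GeomDominated.const_mul_pow_mul_self hK hr hΓ).trans
    (Gamma_mul_add_geomDominated_factorial_rpow (by positivity) (by positivity))
  have lower := (factorial_rpow_geomDominated_Gamma_mul_add ha (by positivity) hc).trans
    (GeomDominated.self_const_mul_pow_mul hK hr hΓ)
  simp only [hI]
  exact upper.exists_pow_mul_le_and_le_pow_mul lower (by simp)
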